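/- arXiv:2205.00504 — 4 statements merged into one kernel-verified Lean document; each statement's English description precedes it below -/
import Mathlib

section
/- Let L : ℝ × ℝ → [0, ∞) be differentiable, L_s-strongly smooth (i.e., L(x, y) ≤ L(x₀, y₀) + ⟨(x, y) − (x₀, y₀), ∇L(x₀, y₀)⟩ + (L_s/2)‖(x, y) − (x₀, y₀)‖²), with L(a, a) = 0 and ∇L(a, a) = 0 for all a ∈ ℝ. Then the partial derivatives satisfy |∂₁L(a, b)| ≤ L_s |a − b| and |∂₂L(a, b)| ≤ L_s |a − b| for all a, b ∈ ℝ. -/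
/-- Second part of Lemma 2 (`lem:sc_L_l2_bound`): a nonnegative `L_s`-strongly smooth loss
vanishing on the diagonal with vanishing gradient there has partial derivatives bounded by
`L_s |a − b|`. -/
theorem strongly_smooth_loss_gradient_bound (Ls : ℝ) (hLs : 0 < Ls)
    (L : ℝ → ℝ → ℝ) (hL0 : ∀ a b, 0 ≤ L a b)
    -- `d1 a b` and `d2 a b` are the partial derivatives of `L` at `(a, b)`
    (d1 d2 : ℝ → ℝ → ℝ)
    (hd : ∀ a b : ℝ, HasFDerivAt (fun p : ℝ × ℝ => L p.1 p.2)
      ((d1 a b) • (ContinuousLinearMap.fst ℝ ℝ ℝ)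
        + (d2 a b) • (ContinuousLinearMap.snd ℝ ℝ ℝ)) (a, b))
    (hss : ∀ x y x₀ y₀ : ℝ,
      L x y ≤ L x₀ y₀ + (x - x₀) * d1 x₀ y₀ + (y - y₀) * d2 x₀ y₀
        + Ls / 2 * ((x - x₀) ^ 2 + (y - y₀) ^ 2))
    (hdiag : ∀ a : ℝ, L a a = 0)
    (hgrad : ∀ a : ℝ, d1 a a = 0 ∧ d2 a a = 0) :
    ∀ a b : ℝ, |d1 a b| ≤ Ls * |a - b| ∧ |d2 a b| ≤ Ls * |a - b| := by
  intro a b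
  have h1 := hss a b a a
  rw [hdiag a, (hgrad a).1, (hgrad a).2] at h1
  have hLab : L a b ≤ Ls / 2 * (a - b) ^ 2 := by nlinarith [h1]
  have hLs' : Ls ≠ 0 := ne_of_gt hLs
  have h2 := hss (a - d1 a b / Ls) (b - d2 a b / Ls) a b
  have h0 := hL0 (a - d1 a b / Ls) (b - d2 a b / Ls)
  have hu : d1 a b / Ls * Ls = d1 a b := div_mul_cancel₀ _ hLs'
  have hv : d2 a b / Ls * Ls = d2 a b := div_mul_cancel₀ _ hLs'
  have key : (d1 a b) ^ 2 + (d2 a b) ^ 2 ≤ 2 * Ls * L a b := by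
    nlinarith [h2, h0, hu, hv, sq_nonneg (d1 a b / Ls), sq_nonneg (d2 a b / Ls), hLs]
  have habs : |a - b| ^ 2 = (a - b) ^ 2 := sq_abs _
  have hmul := mul_le_mul_of_nonneg_left hLab (by positivity : (0:ℝ) ≤ 2 * Ls)
  have hpos : 0 ≤ Ls * |a - b| := mul_nonneg hLs.le (abs_nonneg _)
  constructor <;>
  · apply abs_le_of_sq_le_sq _ hpos
    rw [mul_pow, habs]
    nlinarith [key, hmul, sq_nonneg (d1 a b), sq_nonneg (d2 a b)]
end

section
/- Let U be a random vector in ℝ^k, Z a random variable, and ε a random vector in ℝ^p, with U, Z, ε mutually independent. Let A ∈ ℝ^{p×k} and b ∈ ℝ^p, and define X_S = A U + b + ε and X_T = A U + ε (so X_S and X_T are the covariates in source and target domains under the factor model X = AU + bZ + ε with Z = 1 in source and Z = 0 in target). If Φ ∈ ℝ^{q×p} is a linear map such that Φ X_S and Φ X_T have the same distribution, then Φ b = 0. -/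
/-!
Pointwise `Φ X_S = Φ X_T + Φ b`, so alignment says that the law of `Φ X_T` is invariant under
translation by `Φ b`. A finite nonzero measure on a real normed space is invariant under no
nonzero translation `c`: a closed ball carrying more than half of the mass and its translate by a
large multiple `n • c` are disjoint and have the same mass.
-/

open MeasureTheory ProbabilityTheory

namespace MeasureTheory.Measure

open Filter Metric Topology Set

theorem map_add_nsmul_eq_self {G : Type*} [AddMonoid G] [MeasurableSpace G] [MeasurableAdd G]
    {ν : Measure G} {c : G} (h : ν.map (· + c) = ν) (n : ℕ) : ν.map (· + n • c) = ν := by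
  induction n with
  | zero => simp
  | succ n ih =>
    calc ν.map (· + (n + 1) • c) = (ν.map (· + n • c)).map (· + c) := by
          rw [map_map (measurable_add_const c) (measurable_add_const _)]
          simp only [Function.comp_def, add_assoc, succ_nsmul]
      _ = ν := by rw [ih, h]

theorem exists_measure_univ_lt_two_mul_closedBall {E : Type*} [PseudoMetricSpace E]
    [MeasurableSpace E] [OpensMeasurableSpace E] (ν : Measure E) [IsFiniteMeasure ν] [NeZero ν]
    (x : E) : ∃ R : ℝ, ν univ < 2 * ν (closedBall x R) := by
  have hlim : Tendsto (fun n : ℕ => 2 * ν (closedBall x n)) atTop (𝓝 (2 * ν univ)) := by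
    refine ENNReal.Tendsto.const_mul ?_ (Or.inr ENNReal.ofNat_ne_top)
    rw [← iUnion_closedBall_nat x]
    exact tendsto_measure_iUnion_atTop fun m n hmn => closedBall_subset_closedBall (by simpa)
  have hlt : ν univ < 2 * ν univ := by
    simpa only [two_mul] using ENNReal.lt_add_right (measure_ne_top ν univ) (NeZero.ne (ν univ))
  obtain ⟨n, hn⟩ := (hlim.eventually (lt_mem_nhds hlt)).exists
  exact ⟨n, hn⟩

theorem eq_zero_of_map_add_const_eq_self {E : Type*} [NormedAddCommGroup E] [NormedSpace ℝ E]
    [MeasurableSpace E] [OpensMeasurableSpace E] [MeasurableAdd E]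
    {ν : Measure E} [IsFiniteMeasure ν] [NeZero ν] {c : E} (h : ν.map (· + c) = ν) : c = 0 := by
  by_contra hc
  obtain ⟨R, hR⟩ := exists_measure_univ_lt_two_mul_closedBall ν 0
  obtain ⟨n, hn⟩ := exists_nat_gt ((R + R) / ‖c‖)
  set B := closedBall (0 : E) R
  set B' := (· + n • c) ⁻¹' B
  have hB' : ν B' = ν B := by
    conv_rhs => rw [← map_add_nsmul_eq_self h n]
    rw [map_apply (measurable_add_const _) measurableSet_closedBall]
  have hdisj : Disjoint B B' := by
    refine Set.disjoint_left.mpr fun x hxB hxB' => ?_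
    have hx : ‖x‖ ≤ R := mem_closedBall_zero_iff.mp hxB
    have hx' : ‖x + n • c‖ ≤ R := mem_closedBall_zero_iff.mp hxB'
    have hfar : R + R < ‖n • c‖ := by
      rw [RCLike.norm_nsmul ℝ, nsmul_eq_mul]
      exact (div_lt_iff₀ (norm_pos_iff.mpr hc)).mp hn
    have htri := norm_sub_le (x + n • c) x
    rw [add_sub_cancel_left] at htri
    linarith
  have hunion := measure_union (μ := ν) hdisj
    (measurableSet_closedBall.preimage (measurable_add_const _))
  refine (hR.trans_le ?_).false
  calc 2 * ν B = ν (B ∪ B') := by rw [hunion, hB', two_mul]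
    _ ≤ ν univ := measure_mono (subset_univ _)

end MeasureTheory.Measure

theorem factor_model_alignment_kills_sensitive_direction_general
    {Ω : Type*} [MeasurableSpace Ω] (μ : Measure Ω) [IsProbabilityMeasure μ]
    {k p q : ℕ}
    (U : Ω → (Fin k → ℝ)) (ε : Ω → (Fin p → ℝ))
    (hU : Measurable U) (hε : Measurable ε)
    (A : Matrix (Fin p) (Fin k) ℝ) (b : Fin p → ℝ)
    (XS XT : Ω → (Fin p → ℝ))
    (hXS : ∀ ω, XS ω = A.mulVec (U ω) + b + ε ω)
    (hXT : ∀ ω, XT ω = A.mulVec (U ω) + ε ω)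
    (Φ : Matrix (Fin q) (Fin p) ℝ)
    (halign : μ.map (fun ω => Φ.mulVec (XS ω)) = μ.map (fun ω => Φ.mulVec (XT ω))) :
    Φ.mulVec b = 0 := by
  have hXT_meas : Measurable fun ω => Φ.mulVec (XT ω) := by
    simp only [hXT]
    fun_prop
  have hXS_shift : (fun ω => Φ.mulVec (XS ω)) = (· + Φ.mulVec b) ∘ fun ω => Φ.mulVec (XT ω) := by
    funext ω
    simp only [Function.comp_apply, hXS, hXT, ← Matrix.mulVec_add]
    abel_nf
  have := Measure.isProbabilityMeasure_map (μ := μ) hXT_meas.aemeasurable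
  refine Measure.eq_zero_of_map_add_const_eq_self (ν := μ.map fun ω => Φ.mulVec (XT ω)) ?_
  rw [Measure.map_map (measurable_add_const _) hXT_meas, ← hXS_shift, halign]

/-- Theorem 4 (`thm:factor_DA_IF`): under the factor model `X_S = AU + b + ε`,
`X_T = AU + ε` with `U, Z, ε` mutually independent, if a linear representation `Φ`
aligns the distributions of `Φ X_S` and `Φ X_T`, then `Φ b = 0`. -/
theorem factor_model_alignment_kills_sensitive_direction
    {Ω : Type*} [MeasurableSpace Ω] (μ : Measure Ω) [IsProbabilityMeasure μ]
    {k p q : ℕ}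
    (U : Ω → (Fin k → ℝ)) (Z : Ω → ℝ) (ε : Ω → (Fin p → ℝ))
    (hU : Measurable U) (hZ : Measurable Z) (hε : Measurable ε)
    (hindep : iIndepFun
      (m := (Fin.cons (inferInstance : MeasurableSpace (Fin k → ℝ))
        (Fin.cons (inferInstance : MeasurableSpace ℝ)
          (Fin.cons (inferInstance : MeasurableSpace (Fin p → ℝ)) (fun i => i.elim0)) :
            ∀ i : Fin 2, MeasurableSpace (![Fin k → ℝ, ℝ, Fin p → ℝ] i.succ)) :
        ∀ i : Fin 3, MeasurableSpace (![Fin k → ℝ, ℝ, Fin p → ℝ] i)))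
      (Fin.cons U (Fin.cons Z (Fin.cons ε (fun i => i.elim0)) :
          ∀ i : Fin 2, Ω → ![Fin k → ℝ, ℝ, Fin p → ℝ] i.succ) :
        ∀ i : Fin 3, Ω → ![Fin k → ℝ, ℝ, Fin p → ℝ] i) μ)
    (A : Matrix (Fin p) (Fin k) ℝ) (b : Fin p → ℝ)
    (XS XT : Ω → (Fin p → ℝ))
    (hXS : ∀ ω, XS ω = A.mulVec (U ω) + b + ε ω)
    (hXT : ∀ ω, XT ω = A.mulVec (U ω) + ε ω)
    (Φ : Matrix (Fin q) (Fin p) ℝ)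
    (halign : μ.map (fun ω => Φ.mulVec (XS ω)) = μ.map (fun ω => Φ.mulVec (XT ω))) :
    Φ.mulVec b = 0 :=
  factor_model_alignment_kills_sensitive_direction_general μ U ε hU hε A b XS XT hXS hXT Φ halign
end

section
/- Let P be a probability measure on ℝⁿ, ε > 0, and for a measurable map T : ℝⁿ → ℝⁿ with E_{x∼P}[‖x − T(x)‖] ≤ ε, define R_T(f, g) = E_{x∼P}[(f(x) − g(T(x)))²] and M_T(f) = argmin_g R_T(f, g) (assumed to exist with vanishing Gateaux derivative: E_{x∼P}[(f(x) − M_T(f)(T(x))) h(T(x))] = 0 for all directions h). Then for any f, with Q = T#P: (a) ‖f − M_T(f)‖²_Q ≤ R_T(f, f), and (b) ‖M_T(f₁) − M_T(f₂)‖_Q ≤ ‖f₁ − f₂‖_P. Consequently, for any functions f̃ and f₀, sup over Q = T#P with T ∈ 𝒯_ε of E_{x∼Q}[(f̃(x) − f₀(x))²] ≤ 4 [sup_{T∈𝒯_ε} R_T(f̃, f̃) + sup_{T∈𝒯_ε} R_T(f₀, f₀) + E_{x∼P}[(f̃(x) − f₀(x))²]]. -/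
/-!
Both (a) and (b) are Pythagoras in `L²(P)`: stationarity of `M_T f` says that the residual
`f − (M_T f) ∘ T` is orthogonal to every function of `T x`. Hence
`f − f ∘ T = (f − (M_T f) ∘ T) + (M_T f − f) ∘ T` and
`f₁ − f₂ = (difference of the two residuals) + (M_T f₁ − M_T f₂) ∘ T` are orthogonal
decompositions, and their second summands are dominated by the sum. The final bound follows from
`f̃ ∘ T − f₀ ∘ T = (f̃ − M_T f̃) ∘ T + (M_T f̃ − M_T f₀) ∘ T + (M_T f₀ − f₀) ∘ T`
and `(a + b + c)² ≤ 3 (a² + b² + c²)`.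
-/

open MeasureTheory

section

variable {α : Type*} [MeasurableSpace α] {μ : Measure α}

theorem integral_sq_le_integral_add_sq_of_integral_mul_eq_zero {u w : α → ℝ}
    (hu : MemLp u 2 μ) (hw : MemLp w 2 μ) (huw : ∫ x, u x * w x ∂μ = 0) :
    ∫ x, w x ^ 2 ∂μ ≤ ∫ x, (u x + w x) ^ 2 ∂μ := by
  have hint : Integrable (fun x => u x * w x) μ := hu.integrable_mul hw
  calc ∫ x, w x ^ 2 ∂μ = ∫ x, (w x ^ 2 + 2 * (u x * w x)) ∂μ := by
        rw [integral_add hw.integrable_sq (hint.const_mul 2), integral_const_mul, huw]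
        ring
    _ ≤ ∫ x, (u x + w x) ^ 2 ∂μ :=
        integral_mono (hw.integrable_sq.add (hint.const_mul 2)) (hu.add hw).integrable_sq
          fun x => by nlinarith [sq_nonneg (u x)]

theorem integral_sub_sq_le_three_mul {a b c d : α → ℝ} (ha : MemLp a 2 μ) (hb : MemLp b 2 μ)
    (hc : MemLp c 2 μ) (hd : MemLp d 2 μ) :
    ∫ x, (a x - d x) ^ 2 ∂μ ≤
      3 * (∫ x, (a x - b x) ^ 2 ∂μ + ∫ x, (b x - c x) ^ 2 ∂μ + ∫ x, (d x - c x) ^ 2 ∂μ) := by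
  have hab : Integrable (fun x => (a x - b x) ^ 2) μ := (ha.sub hb).integrable_sq
  have hbc : Integrable (fun x => (b x - c x) ^ 2) μ := (hb.sub hc).integrable_sq
  have hdc : Integrable (fun x => (d x - c x) ^ 2) μ := (hd.sub hc).integrable_sq
  have habc : Integrable (fun x => (a x - b x) ^ 2 + (b x - c x) ^ 2) μ := hab.add hbc
  rw [← integral_add hab hbc, ← integral_add habc hdc, ← integral_const_mul]
  refine integral_mono (ha.sub hd).integrable_sq ((habc.add hdc).const_mul 3) fun x => ?_
  nlinarith [sq_nonneg (a x - 2 * b x + c x), sq_nonneg (b x - 2 * c x + d x),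
    sq_nonneg (a x - b x - c x + d x)]

section Stationary

variable {T : α → α}

theorem integral_sq_comp_sub_le_of_stationary {f g : α → ℝ} (hf : MemLp f 2 μ)
    (hfT : MemLp (fun x => f (T x)) 2 μ) (hgT : MemLp (fun x => g (T x)) 2 μ)
    (hstat : ∀ h : α → ℝ, ∫ x, (f x - g (T x)) * h (T x) ∂μ = 0) :
    ∫ x, (f (T x) - g (T x)) ^ 2 ∂μ ≤ ∫ x, (f x - f (T x)) ^ 2 ∂μ := by
  have := integral_sq_le_integral_add_sq_of_integral_mul_eq_zero
    (u := fun x => f x - g (T x)) (w := fun x => g (T x) - f (T x))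
    (hf.sub hgT) (hgT.sub hfT) (hstat fun y => g y - f y)
  simpa only [sub_sq_comm (g _), sub_add_sub_cancel] using this

theorem integral_sq_comp_sub_comp_le_of_stationary {f₁ f₂ g₁ g₂ : α → ℝ} (hf₁ : MemLp f₁ 2 μ)
    (hf₂ : MemLp f₂ 2 μ) (hg₁T : MemLp (fun x => g₁ (T x)) 2 μ)
    (hg₂T : MemLp (fun x => g₂ (T x)) 2 μ)
    (hstat₁ : ∀ h : α → ℝ, ∫ x, (f₁ x - g₁ (T x)) * h (T x) ∂μ = 0)
    (hstat₂ : ∀ h : α → ℝ, ∫ x, (f₂ x - g₂ (T x)) * h (T x) ∂μ = 0) :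
    ∫ x, (g₁ (T x) - g₂ (T x)) ^ 2 ∂μ ≤ ∫ x, (f₁ x - f₂ x) ^ 2 ∂μ := by
  have hD := hg₁T.sub hg₂T
  have hr₁ : Integrable (fun x => (f₁ x - g₁ (T x)) * (g₁ (T x) - g₂ (T x))) μ :=
    (hf₁.sub hg₁T).integrable_mul hD
  have hr₂ : Integrable (fun x => (f₂ x - g₂ (T x)) * (g₁ (T x) - g₂ (T x))) μ :=
    (hf₂.sub hg₂T).integrable_mul hD
  have horth : ∫ x, ((f₁ x - g₁ (T x)) - (f₂ x - g₂ (T x))) * (g₁ (T x) - g₂ (T x)) ∂μ = 0 := by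
    calc _ = ∫ x, ((f₁ x - g₁ (T x)) * (g₁ (T x) - g₂ (T x))
              - (f₂ x - g₂ (T x)) * (g₁ (T x) - g₂ (T x))) ∂μ := by
          congr 1; ext x; ring
      _ = 0 := by
          rw [integral_sub hr₁ hr₂, hstat₁ fun y => g₁ y - g₂ y, hstat₂ fun y => g₁ y - g₂ y,
            sub_zero]
  have := integral_sq_le_integral_add_sq_of_integral_mul_eq_zero
    (u := fun x => (f₁ x - g₁ (T x)) - (f₂ x - g₂ (T x))) (w := fun x => g₁ (T x) - g₂ (T x))
    ((hf₁.sub hg₁T).sub (hf₂.sub hg₂T)) hD horth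
  simpa only [sub_sub_sub_comm, sub_add_cancel] using this

end Stationary

end

theorem domain_generalization_uniform_bound_general {n : ℕ}
    (P : Measure (EuclideanSpace ℝ (Fin n))) (ε : ℝ)
    (F : Set (EuclideanSpace ℝ (Fin n) → ℝ))
    (hF : ∀ f ∈ F, MemLp f 2 P ∧
      ∀ T : EuclideanSpace ℝ (Fin n) → EuclideanSpace ℝ (Fin n),
        Measurable T → MemLp (fun x => f (T x)) 2 P)
    (RT : (EuclideanSpace ℝ (Fin n) → EuclideanSpace ℝ (Fin n)) →
      (EuclideanSpace ℝ (Fin n) → ℝ) → (EuclideanSpace ℝ (Fin n) → ℝ) → ℝ)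
    (hRT : ∀ T f g, RT T f g = ∫ x, (f x - g (T x)) ^ 2 ∂P)
    (MT : (EuclideanSpace ℝ (Fin n) → EuclideanSpace ℝ (Fin n)) →
      (EuclideanSpace ℝ (Fin n) → ℝ) → (EuclideanSpace ℝ (Fin n) → ℝ))
    (hMF : ∀ T, Measurable T → (∫ x, ‖x - T x‖ ∂P) ≤ ε → ∀ f ∈ F, MT T f ∈ F)
    (hMstat : ∀ T, Measurable T → (∫ x, ‖x - T x‖ ∂P) ≤ ε →
      ∀ f ∈ F, ∀ h : EuclideanSpace ℝ (Fin n) → ℝ,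
        ∫ x, (f x - MT T f (T x)) * h (T x) ∂P = 0)
    (ftilde : EuclideanSpace ℝ (Fin n) → ℝ) (hft : ftilde ∈ F)
    (f₀ : EuclideanSpace ℝ (Fin n) → ℝ) (hf₀ : f₀ ∈ F) :
    ∀ T : EuclideanSpace ℝ (Fin n) → EuclideanSpace ℝ (Fin n),
      Measurable T → (∫ x, ‖x - T x‖ ∂P) ≤ ε →
      -- (a) `‖f − M_T(f)‖²_Q ≤ R_T(f, f)`
      (∀ f ∈ F, ∫ x, (f (T x) - MT T f (T x)) ^ 2 ∂P ≤ RT T f f) ∧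
      -- (b) `‖M_T(f₁) − M_T(f₂)‖_Q ≤ ‖f₁ − f₂‖_P`
      (∀ f₁ ∈ F, ∀ f₂ ∈ F,
        Real.sqrt (∫ x, (MT T f₁ (T x) - MT T f₂ (T x)) ^ 2 ∂P)
          ≤ Real.sqrt (∫ x, (f₁ x - f₂ x) ^ 2 ∂P)) ∧
      -- consequence: uniform out-of-distribution error bound over `Q = T#P`, `T ∈ 𝒯_ε`
      (∫ x, (ftilde (T x) - f₀ (T x)) ^ 2 ∂P
        ≤ 4 * (RT T ftilde ftilde + RT T f₀ f₀ + ∫ x, (ftilde x - f₀ x) ^ 2 ∂P)) := by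
  intro T hT hTε
  have hL2 (f) (hf : f ∈ F) : MemLp f 2 P := (hF f hf).1
  have hL2T (f) (hf : f ∈ F) : MemLp (fun x => f (T x)) 2 P := (hF f hf).2 T hT
  have hM := hMF T hT hTε
  have hstat := hMstat T hT hTε
  have part_a : ∀ f ∈ F, ∫ x, (f (T x) - MT T f (T x)) ^ 2 ∂P ≤ RT T f f := fun f hf =>
    (hRT T f f).symm ▸ integral_sq_comp_sub_le_of_stationary (hL2 f hf) (hL2T f hf)
      (hL2T _ (hM f hf)) (hstat f hf)
  have part_b (f₁) (hf₁ : f₁ ∈ F) (f₂) (hf₂ : f₂ ∈ F) :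
      ∫ x, (MT T f₁ (T x) - MT T f₂ (T x)) ^ 2 ∂P ≤ ∫ x, (f₁ x - f₂ x) ^ 2 ∂P :=
    integral_sq_comp_sub_comp_le_of_stationary (hL2 f₁ hf₁) (hL2 f₂ hf₂) (hL2T _ (hM f₁ hf₁))
      (hL2T _ (hM f₂ hf₂)) (hstat f₁ hf₁) (hstat f₂ hf₂)
  refine ⟨part_a, fun f₁ hf₁ f₂ hf₂ => Real.sqrt_le_sqrt (part_b f₁ hf₁ f₂ hf₂), ?_⟩
  have hsplit := integral_sub_sq_le_three_mul (hL2T _ hft) (hL2T _ (hM _ hft))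
    (hL2T _ (hM _ hf₀)) (hL2T _ hf₀)
  have h_a := part_a _ hft
  have h_b := part_b _ hft _ hf₀
  have h_c := part_a _ hf₀
  have h_a₀ : 0 ≤ ∫ x, (ftilde (T x) - MT T ftilde (T x)) ^ 2 ∂P := by positivity
  have h_b₀ : 0 ≤ ∫ x, (MT T ftilde (T x) - MT T f₀ (T x)) ^ 2 ∂P := by positivity
  have h_c₀ : 0 ≤ ∫ x, (f₀ (T x) - MT T f₀ (T x)) ^ 2 ∂P := by positivity
  linarith

/-- Theorem 3 (`thm:thm_dom_gen`): uniform domain-generalization bound. For every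
`ε`-bounded transport map `T` (i.e. `E_P‖x − T(x)‖ ≤ ε`), with
`R_T(f, g) = E_P[(f(x) − g(T(x)))²]` and `M_T(f)` the stationary minimizer of
`R_T(f, ·)`, we have (a) `‖f − M_T(f)‖²_Q ≤ R_T(f, f)`, (b) `M_T` is 1-Lipschitz from
`‖·‖_P` to `‖·‖_Q`, and consequently the target risk of `f̃` over every `Q = T#P` with
`T ∈ 𝒯_ε` is bounded by `4[R_T(f̃, f̃) + R_T(f₀, f₀) + E_P(f̃ − f₀)²]`
(here `‖h‖²_Q = E_P[h(T(x))²]`). -/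
theorem domain_generalization_uniform_bound {n : ℕ}
    (P : Measure (EuclideanSpace ℝ (Fin n))) [IsProbabilityMeasure P] (ε : ℝ) (hε : 0 < ε)
    (F : Set (EuclideanSpace ℝ (Fin n) → ℝ))
    (hF : ∀ f ∈ F, MemLp f 2 P ∧
      ∀ T : EuclideanSpace ℝ (Fin n) → EuclideanSpace ℝ (Fin n),
        Measurable T → MemLp (fun x => f (T x)) 2 P)
    (RT : (EuclideanSpace ℝ (Fin n) → EuclideanSpace ℝ (Fin n)) →
      (EuclideanSpace ℝ (Fin n) → ℝ) → (EuclideanSpace ℝ (Fin n) → ℝ) → ℝ)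
    (hRT : ∀ T f g, RT T f g = ∫ x, (f x - g (T x)) ^ 2 ∂P)
    (MT : (EuclideanSpace ℝ (Fin n) → EuclideanSpace ℝ (Fin n)) →
      (EuclideanSpace ℝ (Fin n) → ℝ) → (EuclideanSpace ℝ (Fin n) → ℝ))
    (hMF : ∀ T, Measurable T → (∫ x, ‖x - T x‖ ∂P) ≤ ε → ∀ f ∈ F, MT T f ∈ F)
    (hMmin : ∀ T, Measurable T → (∫ x, ‖x - T x‖ ∂P) ≤ ε →
      ∀ f ∈ F, ∀ g ∈ F, RT T f (MT T f) ≤ RT T f g)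
    (hMstat : ∀ T, Measurable T → (∫ x, ‖x - T x‖ ∂P) ≤ ε →
      ∀ f ∈ F, ∀ h : EuclideanSpace ℝ (Fin n) → ℝ,
        ∫ x, (f x - MT T f (T x)) * h (T x) ∂P = 0)
    (ftilde : EuclideanSpace ℝ (Fin n) → ℝ) (hft : ftilde ∈ F)
    (f₀ : EuclideanSpace ℝ (Fin n) → ℝ) (hf₀ : f₀ ∈ F) :
    ∀ T : EuclideanSpace ℝ (Fin n) → EuclideanSpace ℝ (Fin n),
      Measurable T → (∫ x, ‖x - T x‖ ∂P) ≤ ε →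
      -- (a) `‖f − M_T(f)‖²_Q ≤ R_T(f, f)`
      (∀ f ∈ F, ∫ x, (f (T x) - MT T f (T x)) ^ 2 ∂P ≤ RT T f f) ∧
      -- (b) `‖M_T(f₁) − M_T(f₂)‖_Q ≤ ‖f₁ − f₂‖_P`
      (∀ f₁ ∈ F, ∀ f₂ ∈ F,
        Real.sqrt (∫ x, (MT T f₁ (T x) - MT T f₂ (T x)) ^ 2 ∂P)
          ≤ Real.sqrt (∫ x, (f₁ x - f₂ x) ^ 2 ∂P)) ∧
      -- consequence: uniform out-of-distribution error bound over `Q = T#P`, `T ∈ 𝒯_ε`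
      (∫ x, (ftilde (T x) - f₀ (T x)) ^ 2 ∂P
        ≤ 4 * (RT T ftilde ftilde + RT T f₀ f₀ + ∫ x, (ftilde x - f₀ x) ^ 2 ∂P)) :=
  domain_generalization_uniform_bound_general P ε F hF RT hRT MT hMF hMstat ftilde hft f₀ hf₀
end

section
/- Let K : 𝒳 × 𝒳 → [0, K_max] be a bounded kernel, P and Q probability measures on 𝒳, and define the similarity-kernel population regularizer R(f, g) = E_{X∼P, X'∼Q}[(f(X) − g(X'))² K(X, X')] (with X, X' independent). Define K_Q(x') = E_{X∼P}[K(X, x')]. Then: (a) the second Gateaux derivative of R in its second argument satisfies ∂₂²R((f, g); h₁, h₂) = 2 E_{X'∼Q}[h₁(X') h₂(X') K_Q(X')]; (b) if inf_h ‖h √K_Q‖_Q / ‖h‖_Q ≥ φ > 0 then R is 2φ²-strongly convex in its second argument with respect to ‖·‖_Q; and (c) R satisfies the cross-Lipschitz bound |∂₂R((f₂, g); h) − ∂₂R((f₁, g); h)| ≤ 2 K_max ‖f₁ − f₂‖_P ‖h‖_Q. -/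
/-!
`R(f, g)` is a quadratic polynomial in `g`, so its second-order expansion in `g` is exact, and
Fubini turns every term that depends on `X'` alone, integrated against `K(X, X')`, into an
integral against `K_Q`. For the cross-Lipschitz bound, `|K| ≤ K_max` and independence factor the
integral into `E|f₁ - f₂|(X) · E|h|(X')`, and on a probability space the `L¹` norm is at most the
`L²` norm.
-/

open MeasureTheory

lemma integral_abs_le_sqrt_integral_sq {Ω : Type*} [MeasurableSpace Ω] {μ : Measure Ω}
    [IsProbabilityMeasure μ] {v : Ω → ℝ} (hv : MemLp v 2 μ) :
    ∫ x, |v x| ∂μ ≤ Real.sqrt (∫ x, v x ^ 2 ∂μ) := by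
  have hvar := ProbabilityTheory.variance_nonneg |v| μ
  rw [ProbabilityTheory.variance_eq_sub hv.abs] at hvar
  refine Real.le_sqrt_of_sq_le ?_
  simpa [sq_abs] using hvar

section KernelRegularizer

variable {α β : Type*} [MeasurableSpace α] [MeasurableSpace β]

noncomputable def kernelRegularizer (μ : Measure α) (ν : Measure β) (k : α → β → ℝ)
    (f : α → ℝ) (g : β → ℝ) : ℝ :=
  ∫ p, (f p.1 - g p.2) ^ 2 * k p.1 p.2 ∂(μ.prod ν)

noncomputable def kernelRegularizerDeriv (μ : Measure α) (ν : Measure β) (k : α → β → ℝ)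
    (f : α → ℝ) (g h : β → ℝ) : ℝ :=
  2 * ∫ p, (g p.2 - f p.1) * h p.2 * k p.1 p.2 ∂(μ.prod ν)

noncomputable def kernelMarginal (μ : Measure α) (k : α → β → ℝ) (y : β) : ℝ :=
  ∫ x, k x y ∂μ

variable {μ : Measure α} {ν : Measure β} {k : α → β → ℝ} {C : ℝ}

lemma integrable_mul_mul_kernel (hk : Measurable fun p : α × β => k p.1 p.2)
    (hkC : ∀ x y, |k x y| ≤ C) {a b : α × β → ℝ} (ha : MemLp a 2 (μ.prod ν))
    (hb : MemLp b 2 (μ.prod ν)) :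
    Integrable (fun p => a p * b p * k p.1 p.2) (μ.prod ν) :=
  (ha.integrable_mul hb).mul_bdd hk.aestronglyMeasurable (ae_of_all _ fun p => hkC p.1 p.2)

lemma integral_prod_mul_kernel_eq_integral_mul_kernelMarginal [SFinite μ] [SFinite ν]
    {w : β → ℝ} (hw : Integrable (fun p : α × β => w p.2 * k p.1 p.2) (μ.prod ν)) :
    ∫ p, w p.2 * k p.1 p.2 ∂(μ.prod ν) = ∫ y, w y * kernelMarginal μ k y ∂ν := by
  rw [integral_prod_symm _ hw]
  simp only [integral_const_mul, kernelMarginal]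

lemma abs_integral_prod_mul_kernel_le [IsProbabilityMeasure μ] [IsProbabilityMeasure ν]
    (hkC : ∀ x y, |k x y| ≤ C) {u : α → ℝ} {h : β → ℝ}
    (hu : MemLp u 2 μ) (hh : MemLp h 2 ν) :
    |∫ p, u p.1 * h p.2 * k p.1 p.2 ∂(μ.prod ν)|
      ≤ C * Real.sqrt (∫ x, u x ^ 2 ∂μ) * Real.sqrt (∫ y, h y ^ 2 ∂ν) := by
  obtain ⟨x⟩ := nonempty_of_isProbabilityMeasure μ
  obtain ⟨y⟩ := nonempty_of_isProbabilityMeasure ν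
  have hC : 0 ≤ C := (abs_nonneg _).trans (hkC x y)
  have hint : Integrable (fun p : α × β => |u p.1| * |h p.2| * C) (μ.prod ν) :=
    ((hu.abs.comp_fst ν).integrable_mul (hh.abs.comp_snd μ)).mul_const C
  calc |∫ p, u p.1 * h p.2 * k p.1 p.2 ∂(μ.prod ν)|
      ≤ ∫ p, |u p.1| * |h p.2| * C ∂(μ.prod ν) := by
        refine abs_integral_le_integral_abs.trans (integral_mono_of_nonneg
          (ae_of_all _ fun _ => abs_nonneg _) hint (ae_of_all _ fun p => ?_))
        dsimp only
        rw [abs_mul, abs_mul]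
        gcongr
        exact hkC _ _
    _ = C * ((∫ x, |u x| ∂μ) * ∫ y, |h y| ∂ν) := by
        rw [integral_mul_const, integral_prod_mul (fun x => |u x|) (fun y => |h y|), mul_comm]
    _ ≤ C * (Real.sqrt (∫ x, u x ^ 2 ∂μ) * Real.sqrt (∫ y, h y ^ 2 ∂ν)) := by
        gcongr
        · exact integral_abs_le_sqrt_integral_sq hu
        · exact integral_abs_le_sqrt_integral_sq hh
    _ = C * Real.sqrt (∫ x, u x ^ 2 ∂μ) * Real.sqrt (∫ y, h y ^ 2 ∂ν) := by ring

section FiniteMeasure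

variable [IsFiniteMeasure μ] [IsFiniteMeasure ν]
  (hk : Measurable fun p : α × β => k p.1 p.2) (hkC : ∀ x y, |k x y| ≤ C)
include hk hkC

lemma kernelRegularizerDeriv_add_sub {f : α → ℝ} {g h₁ h₂ : β → ℝ} (hf : MemLp f 2 μ)
    (hg : MemLp g 2 ν) (hh₁ : MemLp h₁ 2 ν) (hh₂ : MemLp h₂ 2 ν) :
    kernelRegularizerDeriv μ ν k f (fun y => g y + h₂ y) h₁ - kernelRegularizerDeriv μ ν k f g h₁
      = 2 * ∫ y, h₁ y * h₂ y * kernelMarginal μ k y ∂ν := by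
  have I₁ : Integrable (fun p : α × β => (g p.2 + h₂ p.2 - f p.1) * h₁ p.2 * k p.1 p.2)
      (μ.prod ν) :=
    integrable_mul_mul_kernel hk hkC (((hg.comp_snd μ).add (hh₂.comp_snd μ)).sub (hf.comp_fst ν))
      (hh₁.comp_snd μ)
  have I₂ : Integrable (fun p : α × β => (g p.2 - f p.1) * h₁ p.2 * k p.1 p.2) (μ.prod ν) :=
    integrable_mul_mul_kernel hk hkC ((hg.comp_snd μ).sub (hf.comp_fst ν)) (hh₁.comp_snd μ)
  have I₃ : Integrable (fun p : α × β => h₁ p.2 * h₂ p.2 * k p.1 p.2) (μ.prod ν) :=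
    integrable_mul_mul_kernel hk hkC (hh₁.comp_snd μ) (hh₂.comp_snd μ)
  rw [kernelRegularizerDeriv, kernelRegularizerDeriv, ← mul_sub, ← integral_sub I₁ I₂,
    ← integral_prod_mul_kernel_eq_integral_mul_kernelMarginal I₃]
  congr 2 with p
  ring

lemma kernelRegularizer_eq_add_deriv_add {f : α → ℝ} {g₁ g₂ : β → ℝ} (hf : MemLp f 2 μ)
    (hg₁ : MemLp g₁ 2 ν) (hg₂ : MemLp g₂ 2 ν) :
    kernelRegularizer μ ν k f g₁ = kernelRegularizer μ ν k f g₂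
      + kernelRegularizerDeriv μ ν k f g₂ (fun y => g₁ y - g₂ y)
      + ∫ y, (g₁ y - g₂ y) ^ 2 * kernelMarginal μ k y ∂ν := by
  have hr := (hf.comp_fst ν).sub (hg₂.comp_snd μ)
  have hd := (hg₁.comp_snd μ).sub (hg₂.comp_snd μ)
  have J₁ : Integrable (fun p : α × β => (f p.1 - g₂ p.2) * (f p.1 - g₂ p.2) * k p.1 p.2)
      (μ.prod ν) :=
    integrable_mul_mul_kernel hk hkC hr hr
  have J₂ : Integrable (fun p : α × β => (g₂ p.2 - f p.1) * (g₁ p.2 - g₂ p.2) * k p.1 p.2)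
      (μ.prod ν) :=
    integrable_mul_mul_kernel hk hkC ((hg₂.comp_snd μ).sub (hf.comp_fst ν)) hd
  have J₃ : Integrable (fun p : α × β => (g₁ p.2 - g₂ p.2) * (g₁ p.2 - g₂ p.2) * k p.1 p.2)
      (μ.prod ν) :=
    integrable_mul_mul_kernel hk hkC hd hd
  simp only [kernelRegularizer, kernelRegularizerDeriv, sq]
  have hexpand : (fun p : α × β => (f p.1 - g₁ p.2) * (f p.1 - g₁ p.2) * k p.1 p.2)
      = fun p => (f p.1 - g₂ p.2) * (f p.1 - g₂ p.2) * k p.1 p.2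
        + 2 * ((g₂ p.2 - f p.1) * (g₁ p.2 - g₂ p.2) * k p.1 p.2)
        + (g₁ p.2 - g₂ p.2) * (g₁ p.2 - g₂ p.2) * k p.1 p.2 := by
    ext p
    ring
  rw [hexpand, integral_add _ J₃, integral_add J₁ (J₂.const_mul 2),
    integral_const_mul, integral_prod_mul_kernel_eq_integral_mul_kernelMarginal
      (w := fun y => (g₁ y - g₂ y) * (g₁ y - g₂ y)) J₃]
  exact J₁.add (J₂.const_mul 2)

lemma kernelRegularizerDeriv_sub {f₁ f₂ : α → ℝ} {g h : β → ℝ} (hf₁ : MemLp f₁ 2 μ)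
    (hf₂ : MemLp f₂ 2 μ) (hg : MemLp g 2 ν) (hh : MemLp h 2 ν) :
    kernelRegularizerDeriv μ ν k f₂ g h - kernelRegularizerDeriv μ ν k f₁ g h
      = 2 * ∫ p, (f₁ p.1 - f₂ p.1) * h p.2 * k p.1 p.2 ∂(μ.prod ν) := by
  have I : ∀ f : α → ℝ, MemLp f 2 μ →
      Integrable (fun p : α × β => (g p.2 - f p.1) * h p.2 * k p.1 p.2) (μ.prod ν) :=
    fun f hf => integrable_mul_mul_kernel hk hkC ((hg.comp_snd μ).sub (hf.comp_fst ν))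
      (hh.comp_snd μ)
  rw [kernelRegularizerDeriv, kernelRegularizerDeriv, ← mul_sub,
    ← integral_sub (I f₂ hf₂) (I f₁ hf₁)]
  congr 2 with p
  ring

end FiniteMeasure

lemma abs_kernelRegularizerDeriv_sub_le [IsProbabilityMeasure μ] [IsProbabilityMeasure ν]
    (hk : Measurable fun p : α × β => k p.1 p.2) (hkC : ∀ x y, |k x y| ≤ C) {f₁ f₂ : α → ℝ}
    {g h : β → ℝ} (hf₁ : MemLp f₁ 2 μ) (hf₂ : MemLp f₂ 2 μ) (hg : MemLp g 2 ν)
    (hh : MemLp h 2 ν) :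
    |kernelRegularizerDeriv μ ν k f₂ g h - kernelRegularizerDeriv μ ν k f₁ g h|
      ≤ 2 * C * Real.sqrt (∫ x, (f₁ x - f₂ x) ^ 2 ∂μ) * Real.sqrt (∫ y, h y ^ 2 ∂ν) := by
  rw [kernelRegularizerDeriv_sub hk hkC hf₁ hf₂ hg hh, abs_mul, abs_two, mul_assoc 2 C,
    mul_assoc 2]
  gcongr
  exact abs_integral_prod_mul_kernel_le hkC (hf₁.sub hf₂) hh

end KernelRegularizer

theorem kernel_regularizer_properties_general
    {𝒳 : Type*} [MeasurableSpace 𝒳] (P Q : Measure 𝒳)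
    [IsProbabilityMeasure P] [IsProbabilityMeasure Q]
    (Kmax : ℝ) (K : 𝒳 → 𝒳 → ℝ)
    (hKmeas : Measurable fun p : 𝒳 × 𝒳 => K p.1 p.2)
    (hK0 : ∀ x x', 0 ≤ K x x') (hKmax : ∀ x x', K x x' ≤ Kmax)
    (KQ : 𝒳 → ℝ) (hKQ : ∀ x', KQ x' = ∫ x, K x x' ∂P)
    (F : Set (𝒳 → ℝ)) (hFP : ∀ f ∈ F, MemLp f 2 P) (hFQ : ∀ f ∈ F, MemLp f 2 Q)
    (R : (𝒳 → ℝ) → (𝒳 → ℝ) → ℝ)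
    (hR : ∀ f g, R f g = ∫ p, (f p.1 - g p.2) ^ 2 * K p.1 p.2 ∂(P.prod Q))
    (D2 : (𝒳 → ℝ) → (𝒳 → ℝ) → (𝒳 → ℝ) → ℝ)
    (hD2 : ∀ f g h, D2 f g h = 2 * ∫ p, (g p.2 - f p.1) * h p.2 * K p.1 p.2 ∂(P.prod Q)) :
    -- (a) the second Gateaux derivative of `R` in its second argument
    (∀ f ∈ F, ∀ g ∈ F, ∀ h₁, MemLp h₁ 2 Q → ∀ h₂, MemLp h₂ 2 Q →
      D2 f (fun x => g x + h₂ x) h₁ - D2 f g h₁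
        = 2 * ∫ x', h₁ x' * h₂ x' * KQ x' ∂Q) ∧
    -- (b) `2φ²`-strong convexity under the coercivity condition
    (∀ φ : ℝ, 0 < φ →
      (∀ h : 𝒳 → ℝ, MemLp h 2 Q → φ ^ 2 * ∫ x', (h x') ^ 2 ∂Q
        ≤ ∫ x', (h x') ^ 2 * KQ x' ∂Q) →
      ∀ f ∈ F, ∀ g₁ ∈ F, ∀ g₂ ∈ F,
        R f g₁ ≥ R f g₂ + D2 f g₂ (fun x => g₁ x - g₂ x)
          + (2 * φ ^ 2) / 2 * ∫ x', (g₁ x' - g₂ x') ^ 2 ∂Q) ∧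
    -- (c) cross-Lipschitz bound with constant `2 K_max`
    (∀ f₁ ∈ F, ∀ f₂ ∈ F, ∀ g ∈ F, ∀ h : 𝒳 → ℝ, MemLp h 2 Q →
      |D2 f₂ g h - D2 f₁ g h|
        ≤ 2 * Kmax * Real.sqrt (∫ x, (f₁ x - f₂ x) ^ 2 ∂P)
            * Real.sqrt (∫ x', (h x') ^ 2 ∂Q)) := by
  obtain rfl : R = kernelRegularizer P Q K := funext₂ hR
  obtain rfl : D2 = kernelRegularizerDeriv P Q K := funext₃ hD2
  obtain rfl : KQ = kernelMarginal P K := funext hKQ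
  have hKC : ∀ x x', |K x x'| ≤ Kmax := fun x x' =>
    abs_le.2 ⟨by linarith [hK0 x x', hKmax x x'], hKmax x x'⟩
  refine ⟨fun f hf g hg h₁ hh₁ h₂ hh₂ => ?_, fun φ _ hcoer f hf g₁ hg₁ g₂ hg₂ => ?_,
    fun f₁ hf₁ f₂ hf₂ g hg h hh => ?_⟩
  · exact kernelRegularizerDeriv_add_sub hKmeas hKC (hFP f hf) (hFQ g hg) hh₁ hh₂
  · have hcoer_diff := hcoer (fun x => g₁ x - g₂ x) ((hFQ g₁ hg₁).sub (hFQ g₂ hg₂))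
    beta_reduce at hcoer_diff
    rw [kernelRegularizer_eq_add_deriv_add hKmeas hKC (hFP f hf) (hFQ g₁ hg₁) (hFQ g₂ hg₂),
      mul_div_cancel_left₀ _ two_ne_zero]
    linarith
  · exact abs_kernelRegularizerDeriv_sub_le hKmeas hKC (hFP f₁ hf₁) (hFP f₂ hf₂) (hFQ g hg) hh

/-- The similarity-kernel population regularizer
`R(f, g) = E_{X∼P, X'∼Q}[(f(X) − g(X'))² K(X, X')]` with Gateaux derivative
`D2((f,g); h) = 2E[(g(X') − f(X)) h(X') K(X, X')]` satisfies:
(a) its second Gateaux derivative in the second argument is the bilinear form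
`(h₁, h₂) ↦ 2E_{X'∼Q}[h₁(X')h₂(X')K_Q(X')]` (expressed as an exact difference identity);
(b) under the coercivity condition `φ²‖h‖²_Q ≤ ‖h√K_Q‖²_Q` it is `2φ²`-strongly convex in
its second argument w.r.t. `‖·‖_Q`; and (c) it satisfies the cross-Lipschitz bound with
constant `2 K_max`. -/
theorem kernel_regularizer_properties
    {𝒳 : Type*} [MeasurableSpace 𝒳] (P Q : Measure 𝒳)
    [IsProbabilityMeasure P] [IsProbabilityMeasure Q] [SigmaFinite P] [SigmaFinite Q]
    (Kmax : ℝ) (K : 𝒳 → 𝒳 → ℝ)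
    (hKmeas : Measurable fun p : 𝒳 × 𝒳 => K p.1 p.2)
    (hK0 : ∀ x x', 0 ≤ K x x') (hKmax : ∀ x x', K x x' ≤ Kmax)
    (KQ : 𝒳 → ℝ) (hKQ : ∀ x', KQ x' = ∫ x, K x x' ∂P)
    (F : Set (𝒳 → ℝ)) (hFP : ∀ f ∈ F, MemLp f 2 P) (hFQ : ∀ f ∈ F, MemLp f 2 Q)
    (R : (𝒳 → ℝ) → (𝒳 → ℝ) → ℝ)
    (hR : ∀ f g, R f g = ∫ p, (f p.1 - g p.2) ^ 2 * K p.1 p.2 ∂(P.prod Q))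
    (D2 : (𝒳 → ℝ) → (𝒳 → ℝ) → (𝒳 → ℝ) → ℝ)
    (hD2 : ∀ f g h, D2 f g h = 2 * ∫ p, (g p.2 - f p.1) * h p.2 * K p.1 p.2 ∂(P.prod Q)) :
    -- (a) the second Gateaux derivative of `R` in its second argument
    (∀ f ∈ F, ∀ g ∈ F, ∀ h₁, MemLp h₁ 2 Q → ∀ h₂, MemLp h₂ 2 Q →
      D2 f (fun x => g x + h₂ x) h₁ - D2 f g h₁
        = 2 * ∫ x', h₁ x' * h₂ x' * KQ x' ∂Q) ∧
    -- (b) `2φ²`-strong convexity under the coercivity condition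
    (∀ φ : ℝ, 0 < φ →
      (∀ h : 𝒳 → ℝ, MemLp h 2 Q → φ ^ 2 * ∫ x', (h x') ^ 2 ∂Q
        ≤ ∫ x', (h x') ^ 2 * KQ x' ∂Q) →
      ∀ f ∈ F, ∀ g₁ ∈ F, ∀ g₂ ∈ F,
        R f g₁ ≥ R f g₂ + D2 f g₂ (fun x => g₁ x - g₂ x)
          + (2 * φ ^ 2) / 2 * ∫ x', (g₁ x' - g₂ x') ^ 2 ∂Q) ∧
    -- (c) cross-Lipschitz bound with constant `2 K_max`
    (∀ f₁ ∈ F, ∀ f₂ ∈ F, ∀ g ∈ F, ∀ h : 𝒳 → ℝ, MemLp h 2 Q →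
      |D2 f₂ g h - D2 f₁ g h|
        ≤ 2 * Kmax * Real.sqrt (∫ x, (f₁ x - f₂ x) ^ 2 ∂P)
            * Real.sqrt (∫ x', (h x') ^ 2 ∂Q)) :=
  kernel_regularizer_properties_general P Q Kmax K hKmeas hK0 hKmax KQ hKQ F hFP hFQ R hR D2 hD2
end
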